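/- Let v and w be fully commutative permutations in S_n. (a) If v ≤ w in the right weak order, then Row₂(P(v)) ⊆ Row₂(P(w)). (b) If v ≤ w in the left weak order, then Row₂(Q(v)) ⊆ Row₂(Q(w)), where Q denotes the RSK recording tableau. -/

import Mathlib

/-- The value in position `j` (0-indexed) of the one-line notation of `w`,
extended by the identity outside the range `[0, n)`. -/
def entry {n : ℕ} (w : Equiv.Perm (Fin n)) (j : ℕ) : ℕ :=
  if h : j < n then (w ⟨j, h⟩ : ℕ) else j

/-- One-line notation of a permutation, as a list of natural numbers (0-indexed values). -/
def oneLine {n : ℕ} (w : Equiv.Perm (Fin n)) : List ℕ :=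
  List.ofFn (fun i => (w i : ℕ))

/-- A permutation is fully commutative iff it avoids the pattern 321. -/
def FullyCommutative {n : ℕ} (w : Equiv.Perm (Fin n)) : Prop :=
  ¬ ∃ i j k : Fin n, i < j ∧ j < k ∧ w k < w j ∧ w j < w i

/-- A permutation is boolean iff it avoids the patterns 321 and 3412. -/
def BooleanPerm {n : ℕ} (w : Equiv.Perm (Fin n)) : Prop :=
  FullyCommutative w ∧
    ¬ ∃ i j k l : Fin n, i < j ∧ j < k ∧ k < l ∧
        w k < w l ∧ w l < w i ∧ w i < w j

/-- The Coxeter length of a permutation: its number of inversions. -/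
def invCount {n : ℕ} (w : Equiv.Perm (Fin n)) : ℕ :=
  (Finset.univ.filter fun p : Fin n × Fin n => p.1 < p.2 ∧ w p.2 < w p.1).card

/-- The support of `w`: the set of (0-indexed) indices `i` such that the simple
transposition `s_i` appears in some (equivalently, every) reduced word of `w`;
equivalently, `{w(0),…,w(i)} ≠ {0,…,i}`, i.e. `max {w(j) : j ≤ i} > i`. -/
def Supp {n : ℕ} (w : Equiv.Perm (Fin n)) : Set ℕ :=
  {i | ∃ j : Fin n, (j : ℕ) ≤ i ∧ i < (w j : ℕ)}

/-- The simple transposition `s_i`, swapping positions `i` and `i+1` (0-indexed). -/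
def simpleTr {n : ℕ} (i : ℕ) (h : i + 1 < n) : Equiv.Perm (Fin n) :=
  Equiv.swap ⟨i, by omega⟩ ⟨i + 1, h⟩

/-- Schensted row insertion of a value into a tableau (a list of rows). -/
def rowInsert : List (List ℕ) → ℕ → List (List ℕ)
  | [], x => [[x]]
  | r :: rest, x =>
    match r.find? (fun y => decide (x < y)) with
    | none => (r ++ [x]) :: rest
    | some y => (r.map fun z => if z = y then x else z) :: rowInsert rest y

/-- RSK insertion tableau of a list. -/
def RSKList (l : List ℕ) : List (List ℕ) := l.foldl rowInsert []

/-- RSK insertion tableau `P(w)` of a permutation. -/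
def RSKP {n : ℕ} (w : Equiv.Perm (Fin n)) : List (List ℕ) := RSKList (oneLine w)

/-- RSK recording tableau `Q(w) = P(w⁻¹)`. -/
def RSKQ {n : ℕ} (w : Equiv.Perm (Fin n)) : List (List ℕ) := RSKP w⁻¹

/-- The set of entries in the first row of a tableau. -/
def Row1 (T : List (List ℕ)) : Finset ℕ := (T.getD 0 []).toFinset

/-- The set of entries in the second row of a tableau. -/
def Row2 (T : List (List ℕ)) : Finset ℕ := (T.getD 1 []).toFinset

/-- `BumpsAt l k z` : during the RSK insertion of the list `l`, the insertion of
the `(k+1)`-st letter of `l` bumps the value `z` from the first row to the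
second row (`z` is the smallest first-row entry larger than the inserted letter). -/
def BumpsAt (l : List ℕ) (k : ℕ) (z : ℕ) : Prop :=
  k < l.length ∧
    ((RSKList (l.take k)).getD 0 []).find? (fun y => decide (l.getD k 0 < y)) = some z

/-- `Bumps l b z` : during the RSK insertion of `l`, the value `b` bumps the
value `z` from the first row to the second row. -/
def Bumps (l : List ℕ) (b z : ℕ) : Prop :=
  ∃ k, l.getD k 0 = b ∧ BumpsAt l k z

/-- A finite set of naturals is crowded if some integer interval `[y, y+2x]`
(with `x > 0`) contains more than `x+1` of its elements. -/
def CrowdedSet (L : Finset ℕ) : Prop :=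
  ∃ x y : ℤ, 0 < x ∧
    x + 1 < ((L.filter fun a : ℕ => y ≤ (a : ℤ) ∧ (a : ℤ) ≤ y + 2 * x).card : ℤ)

/-- A fully commutative permutation is crowded if the second row of its RSK
insertion tableau is a crowded set. -/
def CrowdedPerm {n : ℕ} (w : Equiv.Perm (Fin n)) : Prop :=
  CrowdedSet (Row2 (RSKP w))

/-- Covering relation of the right weak order. -/
def RWCovers {n : ℕ} (u v : Equiv.Perm (Fin n)) : Prop :=
  ∃ i, ∃ h : i + 1 < n, v = u * simpleTr i h ∧ invCount v = invCount u + 1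

/-- The right weak order on `S_n`. -/
def RightWeakLE {n : ℕ} : Equiv.Perm (Fin n) → Equiv.Perm (Fin n) → Prop :=
  Relation.ReflTransGen RWCovers

/-- Covering relation of the left weak order. -/
def LWCovers {n : ℕ} (u v : Equiv.Perm (Fin n)) : Prop :=
  ∃ i, ∃ h : i + 1 < n, v = simpleTr i h * u ∧ invCount v = invCount u + 1

/-- The left weak order on `S_n`. -/
def LeftWeakLE {n : ℕ} : Equiv.Perm (Fin n) → Equiv.Perm (Fin n) → Prop :=
  Relation.ReflTransGen LWCovers

/-- A minimal crowded permutation: a crowded fully commutative permutation all of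
whose strict predecessors (among fully commutative permutations) in the right
weak order are uncrowded. -/
def MinimalCrowded {n : ℕ} (w : Equiv.Perm (Fin n)) : Prop :=
  FullyCommutative w ∧ CrowdedPerm w ∧
    ∀ v : Equiv.Perm (Fin n), FullyCommutative v → RightWeakLE v w → v ≠ w →
      ¬ CrowdedPerm v

/-- `l` is an increasing subsequence of the one-line notation of `w`. -/
def IncreasingSubseq {n : ℕ} (w : Equiv.Perm (Fin n)) (l : List ℕ) : Prop :=
  l.Sublist (oneLine w) ∧ l.Pairwise (· < ·)

/-- The length of a longest increasing subsequence of `w`. -/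
noncomputable def lisLen {n : ℕ} (w : Equiv.Perm (Fin n)) : ℕ :=
  sSup {k | ∃ l : List ℕ, IncreasingSubseq w l ∧ l.length = k}

/-- A consecutive occurrence of the pattern 415263 starting at (0-indexed) position `i`. -/
def Consec415263 {n : ℕ} (w : Equiv.Perm (Fin n)) (i : ℕ) : Prop :=
  i + 5 < n ∧
    entry w (i + 1) < entry w (i + 3) ∧ entry w (i + 3) < entry w (i + 5) ∧
    entry w (i + 5) < entry w i ∧ entry w i < entry w (i + 2) ∧
    entry w (i + 2) < entry w (i + 4)

/-- A consecutive occurrence of the pattern 315264 starting at (0-indexed) position `i`. -/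
def Consec315264 {n : ℕ} (w : Equiv.Perm (Fin n)) (i : ℕ) : Prop :=
  i + 5 < n ∧
    entry w (i + 1) < entry w (i + 3) ∧ entry w (i + 3) < entry w i ∧
    entry w i < entry w (i + 5) ∧ entry w (i + 5) < entry w (i + 2) ∧
    entry w (i + 2) < entry w (i + 4)

/-- An occurrence (not necessarily consecutive) of the pattern 415263 in `w`,
at positions `p 0 < p 1 < ⋯ < p 5`. -/
def Occ415263 {n : ℕ} (w : Equiv.Perm (Fin n)) (p : Fin 6 → Fin n) : Prop :=
  StrictMono p ∧
    w (p 1) < w (p 3) ∧ w (p 3) < w (p 5) ∧ w (p 5) < w (p 0) ∧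
    w (p 0) < w (p 2) ∧ w (p 2) < w (p 4)

/-!
For a 321-avoiding word, Schensted insertion never bumps an entry out of the second row: if the
letter `x` bumps `z` from the first row while some `y > z` sits in the second row, then `y` was
bumped earlier by a letter `x₀` with `z ≤ x₀ < y`, and `y x₀ x` is a 321. So `P` has two rows,
and insertion is `twoRowInsert`, which appends every bumped entry to the second row.

A cover `u ⋖ u s_i` of the right weak order turns an ascent `a b` of the word into `b a`. Every
earlier letter is below `b` (else it forms a 321 with `b a`), so after reading `a b`, resp. `b a`,
the first rows agree, or the second one lacks only `b`, which it has already bumped. This coupling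
(`RowsCoupled`) survives the insertion of every further letter and keeps the second row of `P(u)`
inside that of `P(u s_i)`. The left weak order is the right one under `w ↦ w⁻¹`, and
`Q(w) = P(w⁻¹)`.
-/

lemma List.forall_le_or_exists_split {α : Type*} [LinearOrder α] (l : List α) (x : α) :
    (∀ y ∈ l, y ≤ x) ∨ ∃ A z B, l = A ++ z :: B ∧ (∀ a ∈ A, a ≤ x) ∧ x < z := by
  induction l with
  | nil => simp
  | cons y l ih =>
    by_cases hy : x < y
    · exact Or.inr ⟨[], y, l, rfl, by simp, hy⟩
    · rcases ih with hle | ⟨A, z, B, rfl, hA, hz⟩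
      · exact Or.inl (by simpa [not_lt.mp hy] using hle)
      · exact Or.inr ⟨y :: A, z, B, rfl, by simpa [not_lt.mp hy] using hA, hz⟩

lemma List.map_ite_eq_append_cons {α : Type*} [DecidableEq α] {A B : List α} {z : α} (x : α)
    (hA : z ∉ A) (hB : z ∉ B) :
    (A ++ z :: B).map (fun y => if y = z then x else y) = A ++ x :: B := by
  have hid : ∀ {C : List α}, z ∉ C → C.map (fun y => if y = z then x else y) = C :=
    fun hC => (List.map_congr_left fun y hy => if_neg fun (h : y = z) => hC (h ▸ hy)).trans
      (List.map_id _)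
  simp [hid hA, hid hB]

lemma List.Pairwise.lt_of_append_cons {α : Type*} [Preorder α] {A B : List α} {z b : α}
    (h : (A ++ z :: B).Pairwise (· < ·)) (hb : b ∈ B) : z < b :=
  (List.pairwise_cons.mp (List.pairwise_append.mp h).2.1).1 b hb

lemma List.Pairwise.notMem_of_append_cons {α : Type*} [Preorder α] {A B : List α} {z : α}
    (h : (A ++ z :: B).Pairwise (· < ·)) : z ∉ B := fun hz =>
  lt_irrefl z (h.lt_of_append_cons hz)

lemma List.Pairwise.append_cons_of_lt {α : Type*} [Preorder α] {A B : List α} {x z : α}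
    (h : (A ++ z :: B).Pairwise (· < ·)) (hA : ∀ a ∈ A, a < x) (hx : x < z) :
    (A ++ x :: B).Pairwise (· < ·) := by
  simp only [List.pairwise_append, List.pairwise_cons, List.mem_cons] at h ⊢
  obtain ⟨hA', ⟨hzB, hB⟩, hAzB⟩ := h
  refine ⟨hA', ⟨fun b hb => hx.trans (hzB b hb), hB⟩, fun a ha b hb => ?_⟩
  rcases hb with rfl | hb
  · exact hA a ha
  · exact hAzB a ha b (Or.inr hb)

lemma List.Pairwise.append_singleton_of_lt {α : Type*} [Preorder α] {r : List α} {x : α}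
    (h : r.Pairwise (· < ·)) (hr : ∀ a ∈ r, a < x) : (r ++ [x]).Pairwise (· < ·) :=
  List.pairwise_append.mpr ⟨h, List.pairwise_singleton _ _, fun a ha _ hb =>
    (List.mem_singleton.mp hb).symm ▸ hr a ha⟩

lemma List.pair_sublist_append_singleton {α : Type*} {p : List α} {y : α} (x : α) (hy : y ∈ p) :
    [y, x].Sublist (p ++ [x]) :=
  (List.singleton_sublist.mpr hy).append (List.Sublist.refl [x])

lemma List.Perm.append_singleton_mid {α : Type*} {r r' p : List α} (h : (r ++ r').Perm p)
    (x : α) : (r ++ [x] ++ r').Perm (p ++ [x]) := by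
  classical
  refine List.perm_iff_count.mpr fun a => ?_
  have := List.perm_iff_count.mp h a
  simp only [List.count_append, List.count_cons, List.count_nil] at this ⊢
  grind

lemma List.Perm.exchange_append_singleton {α : Type*} {A B r p : List α} {z : α}
    (h : (A ++ z :: B ++ r).Perm p) (x : α) : (A ++ x :: B ++ (r ++ [z])).Perm (p ++ [x]) := by
  classical
  refine List.perm_iff_count.mpr fun a => ?_
  have := List.perm_iff_count.mp h a
  simp only [List.count_append, List.count_cons, List.count_nil] at this ⊢
  grind

def Avoids321 (l : List ℕ) : Prop :=
  ∀ a b c : ℕ, [a, b, c].Sublist l → ¬ (c < b ∧ b < a)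

lemma Avoids321.sublist {l l' : List ℕ} (h : Avoids321 l') (hs : l.Sublist l') : Avoids321 l :=
  fun a b c habc => h a b c (habc.trans hs)

def twoRowInsert (x : ℕ) (st : List ℕ × List ℕ) : List ℕ × List ℕ :=
  match st.1.find? (fun y => decide (x < y)) with
  | none => (st.1 ++ [x], st.2)
  | some z => (st.1.map fun y => if y = z then x else y, st.2 ++ [z])

lemma twoRowInsert_of_forall_le {r1 r2 : List ℕ} {x : ℕ} (h : ∀ y ∈ r1, y ≤ x) :
    twoRowInsert x (r1, r2) = (r1 ++ [x], r2) := by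
  have hnone : r1.find? (fun y => decide (x < y)) = none := by
    simpa [List.find?_eq_none] using h
  simp [twoRowInsert, hnone]

lemma twoRowInsert_of_split {A B r2 : List ℕ} {x z : ℕ} (hA : ∀ a ∈ A, a ≤ x) (hz : x < z)
    (hB : z ∉ B) : twoRowInsert x (A ++ z :: B, r2) = (A ++ x :: B, r2 ++ [z]) := by
  have hnone : A.find? (fun y => decide (x < y)) = none := by
    simpa [List.find?_eq_none] using hA
  have hsome : (A ++ z :: B).find? (fun y => decide (x < y)) = some z := by
    simp [List.find?_append, hnone, hz]
  have hzA : z ∉ A := fun h => absurd (hA z h) (not_le.mpr hz)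
  simp [twoRowInsert, hsome, List.map_ite_eq_append_cons x hzA hB]

def twoRowRSK (l : List ℕ) : List ℕ × List ℕ :=
  l.foldl (fun st x => twoRowInsert x st) ([], [])

lemma twoRowRSK_append_singleton (p : List ℕ) (x : ℕ) :
    twoRowRSK (p ++ [x]) = twoRowInsert x (twoRowRSK p) := by
  simp [twoRowRSK]

lemma RSKList_append_singleton (p : List ℕ) (x : ℕ) :
    RSKList (p ++ [x]) = rowInsert (RSKList p) x := by
  simp [RSKList]

def toTableau (st : List ℕ × List ℕ) : List (List ℕ) :=
  if st.2.isEmpty then (if st.1.isEmpty then [] else [st.1]) else [st.1, st.2]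

lemma row2_toTableau (st : List ℕ × List ℕ) : Row2 (toTableau st) = st.2.toFinset := by
  obtain ⟨r1, _ | ⟨y, r2⟩⟩ := st
  · rcases r1 with _ | _ <;> simp [toTableau, Row2]
  · simp [toTableau, Row2]

lemma rowInsert_cons_of_find?_eq_none {r : List ℕ} (rest : List (List ℕ)) {x : ℕ}
    (h : r.find? (fun y => decide (x < y)) = none) :
    rowInsert (r :: rest) x = (r ++ [x]) :: rest := by
  rw [rowInsert, h]

lemma rowInsert_cons_of_find?_eq_some {r : List ℕ} (rest : List (List ℕ)) {x z : ℕ}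
    (h : r.find? (fun y => decide (x < y)) = some z) :
    rowInsert (r :: rest) x = (r.map fun y => if y = z then x else y) :: rowInsert rest z := by
  rw [rowInsert, h]

lemma rowInsert_toTableau {st : List ℕ × List ℕ} {x : ℕ}
    (h : ∀ z ∈ st.1, x < z → ∀ y ∈ st.2, y < z) :
    rowInsert (toTableau st) x = toTableau (twoRowInsert x st) := by
  obtain ⟨r1, r2⟩ := st
  cases e : r1.find? (fun y => decide (x < y)) with
  | none =>
    rw [show twoRowInsert x (r1, r2) = (r1 ++ [x], r2) by simp [twoRowInsert, e]]
    rcases r1 with _ | ⟨a, t⟩ <;> rcases r2 with _ | ⟨b, u⟩ <;>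
      simp [toTableau, rowInsert, rowInsert_cons_of_find?_eq_none _ e]
  | some z =>
    rw [show twoRowInsert x (r1, r2) = (r1.map fun y => if y = z then x else y, r2 ++ [z]) by
      simp [twoRowInsert, e]]
    have hz : z ∈ r1 := List.mem_of_find?_eq_some e
    have hr2 : r2.find? (fun y => decide (z < y)) = none := by
      simpa [List.find?_eq_none] using
        fun y hy => (h z hz (by simpa using List.find?_some e) y hy).le
    rcases r1 with _ | ⟨a, t⟩
    · simp at hz
    · rcases r2 with _ | ⟨b, u⟩ <;>
        simp [toTableau, rowInsert, rowInsert_cons_of_find?_eq_some _ e, hr2]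

/-- In `witness`, the second-row entry `y` was bumped by a later, smaller letter `x₀`: a letter
read next and bumping `z ≤ x₀` would complete `y x₀` to a 321. -/
structure TwoRowInvariant (p : List ℕ) (st : List ℕ × List ℕ) : Prop where
  sorted : st.1.Pairwise (· < ·)
  perm : (st.1 ++ st.2).Perm p
  witness : ∀ y ∈ st.2, ∀ z ∈ st.1, z < y → ∃ x₀, [y, x₀].Sublist p ∧ z ≤ x₀ ∧ x₀ < y

namespace TwoRowInvariant

variable {p : List ℕ} {st : List ℕ × List ℕ}

lemma mem_of_mem_fst (h : TwoRowInvariant p st) {y : ℕ} (hy : y ∈ st.1) : y ∈ p :=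
  h.perm.mem_iff.mp (List.mem_append_left _ hy)

lemma mem_of_mem_snd (h : TwoRowInvariant p st) {y : ℕ} (hy : y ∈ st.2) : y ∈ p :=
  h.perm.mem_iff.mp (List.mem_append_right _ hy)

lemma snd_lt (h : TwoRowInvariant p st) (hN : p.Nodup) {x : ℕ} (hx : Avoids321 (p ++ [x]))
    {z : ℕ} (hz : z ∈ st.1) (hxz : x < z) {y : ℕ} (hy : y ∈ st.2) : y < z := by
  have hyz : y ≠ z := fun hyz =>
    List.disjoint_of_nodup_append (hN.perm h.perm.symm) hz (hyz ▸ hy)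
  by_contra hzy
  obtain ⟨x₀, hs, hzx₀, hx₀y⟩ := h.witness y hy z hz (by omega)
  exact hx y x₀ x (hs.append (List.Sublist.refl [x])) ⟨by omega, hx₀y⟩

lemma insert (h : TwoRowInvariant p st) {x : ℕ} (hN : (p ++ [x]).Nodup)
    (hx : Avoids321 (p ++ [x])) : TwoRowInvariant (p ++ [x]) (twoRowInsert x st) := by
  obtain ⟨r1, r2⟩ := st
  have hxp : x ∉ p := fun hxp => (List.nodup_append.mp hN).2.2 x hxp x (by simp) rfl
  have hlt : ∀ y ∈ r1, y ≤ x → y < x := fun y hy hyx =>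
    lt_of_le_of_ne hyx fun e => hxp (e ▸ h.mem_of_mem_fst hy)
  have hold : ∀ y ∈ r2, ∀ z ∈ r1, z < y →
      ∃ x₀, [y, x₀].Sublist (p ++ [x]) ∧ z ≤ x₀ ∧ x₀ < y := fun y hy z hz hzy =>
    let ⟨x₀, hs, hzx₀, hx₀y⟩ := h.witness y hy z hz hzy
    ⟨x₀, hs.trans (List.sublist_append_left _ _), hzx₀, hx₀y⟩
  have hnew : ∀ y ∈ p, ∀ z ≤ x, x < y →
      ∃ x₀, [y, x₀].Sublist (p ++ [x]) ∧ z ≤ x₀ ∧ x₀ < y := fun y hy _ hzx hxy =>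
    ⟨x, List.pair_sublist_append_singleton x hy, hzx, hxy⟩
  rcases r1.forall_le_or_exists_split x with hle | ⟨A, z, B, rfl, hA, hxz⟩
  · rw [twoRowInsert_of_forall_le hle]
    refine ⟨h.sorted.append_singleton_of_lt fun y hy => hlt y hy (hle y hy),
      h.perm.append_singleton_mid x, fun y hy z' hz' hz'y => ?_⟩
    rcases List.mem_append.mp hz' with hz' | hz'
    · exact hold y hy z' hz' hz'y
    · obtain rfl := List.mem_singleton.mp hz'
      exact hnew y (h.mem_of_mem_snd hy) z' le_rfl hz'y
  · rw [twoRowInsert_of_split hA hxz h.sorted.notMem_of_append_cons]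
    refine ⟨h.sorted.append_cons_of_lt (fun a ha => hlt a (by simp [ha]) (hA a ha)) hxz,
      h.perm.exchange_append_singleton x, fun y hy z' hz' hz'y => ?_⟩
    have hzp : z ∈ p := h.mem_of_mem_fst (by simp)
    simp only [List.mem_append, List.mem_cons, List.not_mem_nil, or_false] at hy hz'
    rcases hy with hy | rfl
    · rcases hz' with hz' | rfl | hz'
      · exact hold y hy z' (by simp [hz']) hz'y
      · exact hnew y (h.mem_of_mem_snd hy) z' le_rfl hz'y
      · exact hold y hy z' (by simp [hz']) hz'y
    · rcases hz' with hz' | rfl | hz'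
      · exact hnew y hzp z' (hA z' hz') hxz
      · exact hnew y hzp z' le_rfl hxz
      · exact absurd (h.sorted.lt_of_append_cons hz') (not_lt.mpr hz'y.le)

end TwoRowInvariant

theorem twoRowInvariant_twoRowRSK {l : List ℕ} (hl : Avoids321 l) (hN : l.Nodup) :
    TwoRowInvariant l (twoRowRSK l) := by
  induction l using List.reverseRecOn with
  | nil => exact ⟨List.Pairwise.nil, List.Perm.refl _, by simp [twoRowRSK]⟩
  | append_singleton p x ih =>
    rw [twoRowRSK_append_singleton]
    have hsub := List.sublist_append_left p [x]
    exact (ih (hl.sublist hsub) (hN.sublist hsub)).insert hN hl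

theorem RSKList_eq_toTableau {l : List ℕ} (hl : Avoids321 l) (hN : l.Nodup) :
    RSKList l = toTableau (twoRowRSK l) := by
  induction l using List.reverseRecOn with
  | nil => rfl
  | append_singleton p x ih =>
    have hsub := List.sublist_append_left p [x]
    have hp := twoRowInvariant_twoRowRSK (hl.sublist hsub) (hN.sublist hsub)
    rw [RSKList_append_singleton, twoRowRSK_append_singleton,
      ih (hl.sublist hsub) (hN.sublist hsub),
      rowInsert_toTableau fun z hz hxz y hy => hp.snd_lt (hN.sublist hsub) hl hz hxz hy]

theorem row2_RSKList {l : List ℕ} (hl : Avoids321 l) (hN : l.Nodup) :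
    Row2 (RSKList l) = (twoRowRSK l).2.toFinset := by
  rw [RSKList_eq_toTableau hl hN, row2_toTableau]

def RowsCoupled (st st' : List ℕ × List ℕ) : Prop :=
  st.2 ⊆ st'.2 ∧ (st.1 = st'.1 ∨ ∃ A m B, st.1 = A ++ m :: B ∧ st'.1 = A ++ B ∧ m ∈ st'.2)

lemma rowsCoupled_twoRowInsert_of_mem {A B r2 r2' : List ℕ} {m x : ℕ}
    (hs : (A ++ m :: B).Pairwise (· < ·)) (hsub : r2 ⊆ r2') (hm : m ∈ r2') (hxm : x ≠ m) :
    RowsCoupled (twoRowInsert x (A ++ m :: B, r2)) (twoRowInsert x (A ++ B, r2')) := by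
  rcases A.forall_le_or_exists_split x with hAle | ⟨A₁, a, A₂, rfl, hA₁, hxa⟩
  · rcases lt_or_gt_of_ne hxm with hxm | hmx
    · rw [twoRowInsert_of_split hAle hxm hs.notMem_of_append_cons]
      rcases B with _ | ⟨b, B⟩
      · rw [twoRowInsert_of_forall_le (by simpa using hAle)]
        exact ⟨by simp [hsub, hm], Or.inl (by simp)⟩
      · rw [twoRowInsert_of_split hAle (hxm.trans (hs.lt_of_append_cons (by simp)))
          (List.Pairwise.notMem_of_append_cons (A := A ++ [m]) (by simpa using hs))]
        exact ⟨by simp [hsub, hm], Or.inr ⟨A ++ [x], b, B, by simp, by simp, by simp⟩⟩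
    · rcases B.forall_le_or_exists_split x with hBle | ⟨B₁, z, B₂, rfl, hB₁, hxz⟩
      · rw [twoRowInsert_of_forall_le (by simp; grind), twoRowInsert_of_forall_le (by simp; grind)]
        exact ⟨hsub, Or.inr ⟨A, m, B ++ [x], by simp, by simp, hm⟩⟩
      · have hs' : ((A ++ m :: B₁) ++ z :: B₂).Pairwise (· < ·) := by simpa using hs
        rw [show A ++ m :: (B₁ ++ z :: B₂) = (A ++ m :: B₁) ++ z :: B₂ by simp,
          show A ++ (B₁ ++ z :: B₂) = (A ++ B₁) ++ z :: B₂ by simp,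
          twoRowInsert_of_split (by simp; grind) hxz hs'.notMem_of_append_cons,
          twoRowInsert_of_split (by simp; grind) hxz hs'.notMem_of_append_cons]
        exact ⟨by simp [hsub], Or.inr ⟨A, m, B₁ ++ x :: B₂, by simp, by simp, by simp [hm]⟩⟩
  · have hs' : (A₁ ++ a :: (A₂ ++ m :: B)).Pairwise (· < ·) := by simpa using hs
    have ha : a ∉ A₂ ++ B := fun ha => hs'.notMem_of_append_cons (by simp at ha ⊢; tauto)
    rw [show A₁ ++ a :: A₂ ++ m :: B = A₁ ++ a :: (A₂ ++ m :: B) by simp,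
      show A₁ ++ a :: A₂ ++ B = A₁ ++ a :: (A₂ ++ B) by simp,
      twoRowInsert_of_split hA₁ hxa hs'.notMem_of_append_cons, twoRowInsert_of_split hA₁ hxa ha]
    exact ⟨by simp [hsub], Or.inr ⟨A₁ ++ x :: A₂, m, B, by simp, by simp, by simp [hm]⟩⟩

lemma RowsCoupled.insert {st st' : List ℕ × List ℕ} (h : RowsCoupled st st')
    (hs : st.1.Pairwise (· < ·)) {x : ℕ} (hx : x ∉ st'.2) :
    RowsCoupled (twoRowInsert x st) (twoRowInsert x st') := by
  obtain ⟨r1, r2⟩ := st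
  obtain ⟨r1', r2'⟩ := st'
  obtain ⟨hsub, rfl | ⟨A, m, B, rfl, rfl, hm⟩⟩ := h
  · cases e : r1.find? (fun y => decide (x < y)) with
    | none => simpa [twoRowInsert, e, RowsCoupled] using hsub
    | some z => simp [twoRowInsert, e, RowsCoupled, hsub]
  · exact rowsCoupled_twoRowInsert_of_mem hs hsub hm fun e => hx (e ▸ hm)

lemma rowsCoupled_twoRowInsert_swap {R T : List ℕ} {a b : ℕ} (hR : R.Pairwise (· < ·))
    (hRb : ∀ z ∈ R, z < b) (hab : a < b) :
    RowsCoupled (twoRowInsert b (twoRowInsert a (R, T)))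
      (twoRowInsert a (twoRowInsert b (R, T))) := by
  rw [twoRowInsert_of_forall_le fun z hz => (hRb z hz).le]
  rcases R.forall_le_or_exists_split a with hRa | ⟨C, z, D, rfl, hC, haz⟩
  · rw [twoRowInsert_of_forall_le hRa, twoRowInsert_of_forall_le (by simp; grind),
      show R ++ [b] = R ++ b :: [] from rfl, twoRowInsert_of_split hRa hab List.not_mem_nil]
    exact ⟨List.subset_append_left _ _, Or.inr ⟨R ++ [a], b, [], by simp, by simp, by simp⟩⟩
  · have hzb : z < b := hRb z (by simp)
    rw [twoRowInsert_of_split hC haz hR.notMem_of_append_cons,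
      twoRowInsert_of_forall_le (by simp; grind),
      show C ++ z :: D ++ [b] = C ++ z :: (D ++ [b]) by simp,
      twoRowInsert_of_split hC haz (by simpa [hzb.ne] using hR.notMem_of_append_cons)]
    exact ⟨List.Subset.refl _, Or.inl (by simp)⟩

theorem rowsCoupled_twoRowRSK_append {p p' : List ℕ} (s : List ℕ)
    (hl : Avoids321 (p ++ s)) (hl' : Avoids321 (p' ++ s))
    (hN : (p ++ s).Nodup) (hN' : (p' ++ s).Nodup)
    (h : RowsCoupled (twoRowRSK p) (twoRowRSK p')) :
    RowsCoupled (twoRowRSK (p ++ s)) (twoRowRSK (p' ++ s)) := by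
  induction s generalizing p p' with
  | nil => simpa using h
  | cons x s ih =>
    simp only [List.append_cons p x s, List.append_cons p' x s] at hl hl' hN hN' ⊢
    refine ih hl hl' hN hN' ?_
    have hsub : ∀ q : List ℕ, q.Sublist (q ++ [x] ++ s) := fun q =>
      (List.sublist_append_left q [x]).trans (List.sublist_append_left _ s)
    have hinv := twoRowInvariant_twoRowRSK (hl.sublist (hsub p)) (hN.sublist (hsub p))
    have hinv' := twoRowInvariant_twoRowRSK (hl'.sublist (hsub p')) (hN'.sublist (hsub p'))
    rw [twoRowRSK_append_singleton, twoRowRSK_append_singleton]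
    refine h.insert hinv.sorted fun hx => (List.nodup_append.mp (hN'.sublist (List.sublist_append_left _ s))).2.2 x
      (hinv'.mem_of_mem_snd hx) x (by simp) rfl

theorem row2_RSKList_subset_of_swap {p s : List ℕ} {a b : ℕ} (hab : a < b)
    (hl : Avoids321 (p ++ a :: b :: s)) (hl' : Avoids321 (p ++ b :: a :: s))
    (hN : (p ++ a :: b :: s).Nodup) (hN' : (p ++ b :: a :: s).Nodup) :
    Row2 (RSKList (p ++ a :: b :: s)) ⊆ Row2 (RSKList (p ++ b :: a :: s)) := by
  have hsub : p.Sublist (p ++ a :: b :: s) := List.sublist_append_left _ _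
  have hinv := twoRowInvariant_twoRowRSK (hl.sublist hsub) (hN.sublist hsub)
  -- a letter `z > b` of `p` would make `z b a` a 321
  have hpb : ∀ z ∈ (twoRowRSK p).1, z < b := fun z hz => by
    have hzp := hinv.mem_of_mem_fst hz
    have hzb : z ≠ b := (List.nodup_append.mp hN').2.2 z hzp b (by simp)
    by_contra hbz
    exact hl' z b a ((List.singleton_sublist.mpr hzp).append (List.sublist_append_left [b, a] s))
      ⟨hab, by omega⟩
  have hstart : RowsCoupled (twoRowRSK (p ++ [a, b])) (twoRowRSK (p ++ [b, a])) := by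
    rw [show p ++ [a, b] = p ++ [a] ++ [b] by simp, show p ++ [b, a] = p ++ [b] ++ [a] by simp]
    simp only [twoRowRSK_append_singleton]
    exact rowsCoupled_twoRowInsert_swap hinv.sorted hpb hab
  have hend := rowsCoupled_twoRowRSK_append s (by simpa using hl) (by simpa using hl')
    (by simpa using hN) (by simpa using hN') hstart
  simp only [List.append_assoc, List.cons_append, List.nil_append] at hend
  rw [row2_RSKList hl hN, row2_RSKList hl' hN']
  exact fun y hy => List.mem_toFinset.mpr (hend.1 (List.mem_toFinset.mp hy))

lemma oneLine_nodup {n : ℕ} (w : Equiv.Perm (Fin n)) : (oneLine w).Nodup :=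
  List.nodup_ofFn.mpr fun _ _ hij => w.injective (Fin.val_injective hij)

lemma FullyCommutative.avoids321_oneLine {n : ℕ} {w : Equiv.Perm (Fin n)}
    (hw : FullyCommutative w) : Avoids321 (oneLine w) := by
  rintro a b c habc ⟨hcb, hba⟩
  obtain ⟨f, hf⟩ := List.sublist_iff_exists_fin_orderEmbedding_get_eq.mp habc
  have hlen : (oneLine w).length = n := List.length_ofFn
  let pos (k : Fin 3) : Fin n := Fin.cast hlen (f k)
  have hpos : StrictMono pos := fun _ _ hkl => f.strictMono hkl
  have hval : ∀ k : Fin 3, [a, b, c].get k = w (pos k) := fun k => by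
    rw [hf k]; simp [oneLine, pos, Fin.cast]
  have ha : a = w (pos 0) := hval 0
  have hb : b = w (pos 1) := hval 1
  have hc : c = w (pos 2) := hval 2
  exact hw ⟨pos 0, pos 1, pos 2, hpos (by decide), hpos (by decide),
    Fin.lt_def.mpr (by omega), Fin.lt_def.mpr (by omega)⟩

section SimpleTransposition

variable {n i : ℕ} (h : i + 1 < n)

lemma simpleTr_val (j : Fin n) :
    (simpleTr i h j : ℕ) = if (j : ℕ) = i then i + 1 else if (j : ℕ) = i + 1 then i else j := by
  rw [simpleTr, Equiv.swap_apply_def]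
  simp only [Fin.ext_iff]
  split_ifs <;> rfl

lemma simpleTr_mul_self : simpleTr i h * simpleTr i h = 1 := Equiv.swap_mul_self _ _

lemma mul_simpleTr_apply_left (u : Equiv.Perm (Fin n)) :
    (u * simpleTr i h) ⟨i, by omega⟩ = u ⟨i + 1, h⟩ :=
  congrArg u (Equiv.swap_apply_left _ _)

lemma mul_simpleTr_apply_right (u : Equiv.Perm (Fin n)) :
    (u * simpleTr i h) ⟨i + 1, h⟩ = u ⟨i, by omega⟩ :=
  congrArg u (Equiv.swap_apply_right _ _)

lemma mul_simpleTr_apply_of_ne (u : Equiv.Perm (Fin n)) {j : Fin n} (hi : (j : ℕ) ≠ i)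
    (hi' : (j : ℕ) ≠ i + 1) : (u * simpleTr i h) j = u j :=
  congrArg u (Fin.ext (by rw [simpleTr_val, if_neg hi, if_neg hi']))

lemma simpleTr_lt_simpleTr {p q : Fin n} (hpq : p < q) (hne : ¬((p : ℕ) = i ∧ (q : ℕ) = i + 1)) :
    simpleTr i h p < simpleTr i h q := by
  have hp := simpleTr_val h p
  have hq := simpleTr_val h q
  rw [Fin.lt_def] at hpq ⊢
  split_ifs at hp hq <;> omega

/-- `(p, q) ↦ (s_i p, s_i q)` matches the inversions of `u * s_i` and of `u` other than
`(i, i + 1)`. -/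
lemma invCount_mul_simpleTr (u : Equiv.Perm (Fin n)) (hu : u ⟨i, by omega⟩ < u ⟨i + 1, h⟩) :
    invCount (u * simpleTr i h) = invCount u + 1 := by
  set s := simpleTr i h
  set e : Fin n × Fin n := (⟨i, by omega⟩, ⟨i + 1, h⟩)
  let inv (v : Equiv.Perm (Fin n)) :=
    Finset.univ.filter fun p : Fin n × Fin n => p.1 < p.2 ∧ v p.2 < v p.1
  have hmaps : ∀ v : Equiv.Perm (Fin n), ∀ p ∈ (inv (v * s)).erase e,
      (s p.1, s p.2) ∈ (inv v).erase e := by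
    intro v p hp
    simp only [inv, e, Finset.mem_erase, Finset.mem_filter, Finset.mem_univ, true_and,
      ne_eq, Prod.ext_iff, Fin.ext_iff] at hp ⊢
    obtain ⟨hpe, hlt, hv⟩ := hp
    refine ⟨fun ⟨h1, h2⟩ => ?_, simpleTr_lt_simpleTr h hlt hpe, hv⟩
    have hlt' : (p.1 : ℕ) < p.2 := hlt
    rw [simpleTr_val] at h1 h2
    split_ifs at h1 h2 <;> omega
  have hss : ∀ j, s (s j) = j := Equiv.swap_apply_self _ _
  have hus : u = u * s * s := by rw [mul_assoc, simpleTr_mul_self, mul_one]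
  have hcard : ((inv (u * s)).erase e).card = ((inv u).erase e).card :=
    Finset.card_nbij' (fun p => (s p.1, s p.2)) (fun p => (s p.1, s p.2)) (hmaps u)
      (fun p hp => hmaps (u * s) p (hus ▸ hp))
      (fun p _ => by simp [hss]) (fun p _ => by simp [hss])
  have he : e ∈ inv (u * s) := Finset.mem_filter.mpr ⟨Finset.mem_univ _,
    Fin.lt_def.mpr (Nat.lt_succ_self i), by
      rw [mul_simpleTr_apply_left h, mul_simpleTr_apply_right h]; exact hu⟩
  have he' : e ∉ inv u := fun he' => (Finset.mem_filter.mp he').2.2.asymm hu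
  calc invCount (u * s) = ((inv (u * s)).erase e).card + 1 :=
        (Finset.card_erase_add_one he).symm
    _ = invCount u + 1 := by rw [hcard, Finset.erase_eq_of_notMem he']; rfl

lemma oneLine_eq_take_append (v : Equiv.Perm (Fin n)) :
    oneLine v = (oneLine v).take i ++ (v ⟨i, by omega⟩ : ℕ) ::
      (v ⟨i + 1, h⟩ : ℕ) :: (oneLine v).drop (i + 2) := by
  have hlen : (oneLine v).length = n := List.length_ofFn
  conv_lhs => rw [← List.take_append_drop i (oneLine v)]
  rw [List.drop_eq_getElem_cons (by omega), List.drop_eq_getElem_cons (by omega)]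
  simp [oneLine]

lemma oneLine_mul_simpleTr (u : Equiv.Perm (Fin n)) :
    oneLine (u * simpleTr i h) = (oneLine u).take i ++ (u ⟨i + 1, h⟩ : ℕ) ::
      (u ⟨i, by omega⟩ : ℕ) :: (oneLine u).drop (i + 2) := by
  have htake : (oneLine (u * simpleTr i h)).take i = (oneLine u).take i := by
    refine List.ext_getElem (by simp [oneLine]) fun j h1 _ => ?_
    have hj : j < i ∧ j < n := by simpa [oneLine] using h1
    simp only [List.getElem_take, oneLine, List.getElem_ofFn]
    rw [mul_simpleTr_apply_of_ne h u (by simp; omega) (by simp; omega)]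
  have hdrop : (oneLine (u * simpleTr i h)).drop (i + 2) = (oneLine u).drop (i + 2) := by
    refine List.ext_getElem (by simp [oneLine]) fun j h1 _ => ?_
    have hj : j < n - (i + 2) := by simpa [oneLine] using h1
    simp only [List.getElem_drop, oneLine, List.getElem_ofFn]
    rw [mul_simpleTr_apply_of_ne h u (by simp; omega) (by simp; omega)]
  rw [oneLine_eq_take_append h, htake, hdrop, mul_simpleTr_apply_left, mul_simpleTr_apply_right]

end SimpleTransposition

lemma RWCovers.exists_ascent {n : ℕ} {u w : Equiv.Perm (Fin n)} (hc : RWCovers u w) :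
    ∃ i, ∃ h : i + 1 < n, w = u * simpleTr i h ∧ u ⟨i, by omega⟩ < u ⟨i + 1, h⟩ := by
  obtain ⟨i, h, rfl, hinv⟩ := hc
  refine ⟨i, h, rfl, lt_of_le_of_ne (not_lt.mp fun hgt => ?_) fun e => ?_⟩
  · -- at a descent of `u`, `u * s_i` has an ascent and `(u * s_i) * s_i = u` is the longer one
    have hlonger := invCount_mul_simpleTr h (u * simpleTr i h)
      (by rwa [mul_simpleTr_apply_left, mul_simpleTr_apply_right])
    rw [mul_assoc, simpleTr_mul_self, mul_one] at hlonger
    omega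
  · simpa [Fin.ext_iff] using u.injective e

lemma FullyCommutative.of_rwCovers {n : ℕ} {u w : Equiv.Perm (Fin n)} (hc : RWCovers u w)
    (hw : FullyCommutative w) : FullyCommutative u := by
  obtain ⟨i, h, rfl, hu⟩ := hc.exists_ascent
  rintro ⟨p, q, r, hpq, hqr, hrq, hqp⟩
  have hval : ∀ j, (u * simpleTr i h) (simpleTr i h j) = u j := fun j =>
    congrArg u (Equiv.swap_apply_self _ _ _)
  -- no two consecutive letters of the 321 occupy the ascent `i, i + 1` of `u`
  have hne : ∀ {j k : Fin n}, u k < u j → ¬((j : ℕ) = i ∧ (k : ℕ) = i + 1) := by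
    rintro j k hkj ⟨hj, hk⟩
    obtain rfl : j = ⟨i, Nat.lt_of_succ_lt h⟩ := Fin.ext hj
    obtain rfl : k = ⟨i + 1, h⟩ := Fin.ext hk
    exact hkj.asymm hu
  exact hw ⟨simpleTr i h p, simpleTr i h q, simpleTr i h r,
    simpleTr_lt_simpleTr h hpq (hne hqp), simpleTr_lt_simpleTr h hqr (hne hrq),
    by rwa [hval, hval], by rwa [hval, hval]⟩

lemma row2_RSKP_subset_of_rwCovers {n : ℕ} {u w : Equiv.Perm (Fin n)} (hc : RWCovers u w)
    (hw : FullyCommutative w) : Row2 (RSKP u) ⊆ Row2 (RSKP w) := by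
  have hu := hw.of_rwCovers hc
  obtain ⟨i, h, rfl, hasc⟩ := hc.exists_ascent
  have hsplit := oneLine_eq_take_append h u
  have hswap := oneLine_mul_simpleTr h u
  have := row2_RSKList_subset_of_swap hasc (hsplit ▸ hu.avoids321_oneLine)
    (hswap ▸ hw.avoids321_oneLine) (hsplit ▸ oneLine_nodup u) (hswap ▸ oneLine_nodup _)
  rwa [← hsplit, ← hswap] at this

lemma FullyCommutative.of_rightWeakLE {n : ℕ} {v w : Equiv.Perm (Fin n)} (hle : RightWeakLE v w)
    (hw : FullyCommutative w) : FullyCommutative v := by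
  induction hle using Relation.ReflTransGen.head_induction_on with
  | refl => exact hw
  | head hc _ ih => exact ih.of_rwCovers hc

lemma row2_RSKP_subset_of_rightWeakLE {n : ℕ} {v w : Equiv.Perm (Fin n)}
    (hw : FullyCommutative w) (hle : RightWeakLE v w) : Row2 (RSKP v) ⊆ Row2 (RSKP w) := by
  induction hle using Relation.ReflTransGen.head_induction_on with
  | refl => exact subset_rfl
  | head hc hrest ih => exact (row2_RSKP_subset_of_rwCovers hc (hw.of_rightWeakLE hrest)).trans ih

lemma FullyCommutative.inv {n : ℕ} {w : Equiv.Perm (Fin n)} (hw : FullyCommutative w) :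
    FullyCommutative w⁻¹ := by
  rintro ⟨i, j, k, hij, hjk, hkj, hji⟩
  exact hw ⟨w⁻¹ k, w⁻¹ j, w⁻¹ i, hkj, hji, by simpa using hij, by simpa using hjk⟩

lemma invCount_inv {n : ℕ} (w : Equiv.Perm (Fin n)) : invCount w⁻¹ = invCount w := by
  refine Finset.card_nbij' (fun p => (w⁻¹ p.2, w⁻¹ p.1)) (fun p => (w p.2, w p.1))
    ?_ ?_ (fun p _ => by simp) (fun p _ => by simp)
  all_goals
    rintro ⟨p, q⟩ hpq
    simp only [Finset.coe_filter, Finset.mem_univ, true_and, Set.mem_ofPred_eq] at hpq ⊢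
    simpa [and_comm] using hpq

lemma LWCovers.inv {n : ℕ} {u v : Equiv.Perm (Fin n)} (hc : LWCovers u v) :
    RWCovers u⁻¹ v⁻¹ := by
  obtain ⟨i, h, rfl, hinv⟩ := hc
  exact ⟨i, h, by rw [mul_inv_rev, simpleTr, Equiv.swap_inv], by
    rw [invCount_inv, invCount_inv, hinv]⟩

lemma rightWeakLE_inv_of_leftWeakLE {n : ℕ} {v w : Equiv.Perm (Fin n)} (hle : LeftWeakLE v w) :
    RightWeakLE v⁻¹ w⁻¹ :=
  Relation.ReflTransGen.lift (· ⁻¹) (fun _ _ => LWCovers.inv) _ _ hle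

theorem row_two_monotone_weak_order_general {n : ℕ} (v w : Equiv.Perm (Fin n))
    (hw : FullyCommutative w) :
    (RightWeakLE v w → Row2 (RSKP v) ⊆ Row2 (RSKP w)) ∧
    (LeftWeakLE v w → Row2 (RSKQ v) ⊆ Row2 (RSKQ w)) :=
  ⟨row2_RSKP_subset_of_rightWeakLE hw, fun hle =>
    row2_RSKP_subset_of_rightWeakLE hw.inv (rightWeakLE_inv_of_leftWeakLE hle)⟩

/-- **Corollary.** For fully commutative `v ≤ w`: (a) in the right weak order,
`Row₂(P(v)) ⊆ Row₂(P(w))`; (b) in the left weak order, `Row₂(Q(v)) ⊆ Row₂(Q(w))`. -/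
theorem row_two_monotone_weak_order {n : ℕ} (v w : Equiv.Perm (Fin n))
    (hv : FullyCommutative v) (hw : FullyCommutative w) :
    (RightWeakLE v w → Row2 (RSKP v) ⊆ Row2 (RSKP w)) ∧
    (LeftWeakLE v w → Row2 (RSKQ v) ⊆ Row2 (RSKQ w)) :=
  row_two_monotone_weak_order_general v w hw
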